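/- arXiv:1510.05323 — 7 statements merged into one kernel-verified Lean document; each statement's English description precedes it below -/
import Mathlib

section
/- Let k be a commutative ring which is a ℚ-algebra, A an associative unital k-algebra, and x ∈ A. Then for all natural numbers p, q: binom(x,p)·binom(x,q) = Σ_{t=0}^{min(p,q)} ((p+q−t)!/((p−t)!·(q−t)!·t!))·binom(x,p+q−t). -/
/-- The binomial coefficient `binom(x,r) = x(x−1)⋯(x−r+1)/r!` of an element `x` of a
(possibly noncommutative) ℚ-algebra `A`; for `r = 0` it equals `1`. -/
noncomputable def binomEl {A : Type*} [Ring A] [Module ℚ A] (x : A) (r : ℕ) : A :=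
  (r.factorial : ℚ)⁻¹ • (((List.range r).map (fun i : ℕ => x - (i : A))).prod)

/-!
Both sides are images under `aeval x` of polynomials over `ℚ`, so it suffices to prove the
identity in `ℚ[X]`, and hence at every natural number `n`. There it is the counting identity
`C(n,p) C(n,q) = ∑ₜ C(p+q-t,p) C(p,t) C(n,p+q-t)`: a `p`-set and a `q`-set meeting in `t`
points are a `(p+q-t)`-set with a `p`-subset and a `t`-subset of that. The factorial
coefficient of the statement is `C(p+q-t,p) C(p,t)`.
-/

open Polynomial Finset

noncomputable def binomialPoly (r : ℕ) : ℚ[X] := (r.factorial : ℚ)⁻¹ • descPochhammer ℚ r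

theorem aeval_descPochhammer {A : Type*} [Ring A] [Algebra ℚ A] (x : A) (r : ℕ) :
    aeval x (descPochhammer ℚ r) = ((List.range r).map fun i : ℕ => x - (i : A)).prod := by
  induction r with
  | zero => simp
  | succ r ih => simp [descPochhammer_succ_right, List.prod_range_succ, ih]

theorem binomEl_eq_aeval_binomialPoly {A : Type*} [Ring A] [Algebra ℚ A] (x : A) (r : ℕ) :
    binomEl x r = aeval x (binomialPoly r) := by
  rw [binomialPoly, map_smul, aeval_descPochhammer, binomEl]

theorem eval_natCast_binomialPoly (n r : ℕ) : (binomialPoly r).eval (n : ℚ) = n.choose r := by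
  rw [binomialPoly, eval_smul, descPochhammer_eval_eq_descFactorial,
    Nat.descFactorial_eq_factorial_mul_choose, smul_eq_mul, Nat.cast_mul,
    inv_mul_cancel_left₀ (by positivity)]

theorem Nat.factorial_div_factorial_mul_factorial_mul_factorial {p q t : ℕ} (htp : t ≤ p)
    (htq : t ≤ q) :
    (p + q - t).factorial / ((p - t).factorial * (q - t).factorial * t.factorial) =
      (p + q - t).choose p * p.choose t := by
  refine Nat.div_eq_of_eq_mul_left (by positivity) ?_
  have hp := Nat.choose_mul_factorial_mul_factorial (show p ≤ p + q - t by omega)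
  have ht := Nat.choose_mul_factorial_mul_factorial htp
  rw [show p + q - t - p = q - t by omega] at hp
  rw [← hp, ← ht]
  ring

theorem Nat.add_choose_eq_sum_range (p m q : ℕ) :
    (p + m).choose q = ∑ t ∈ range (min p q + 1), p.choose t * m.choose (q - t) := by
  rw [Nat.add_choose_eq, Nat.sum_antidiagonal_eq_sum_range_succ_mk]
  refine (sum_subset (fun t ht => ?_) fun t ht hnt => ?_).symm
  · simp only [mem_range] at ht ⊢; omega
  · simp only [mem_range] at ht hnt
    rw [Nat.choose_eq_zero_of_lt (by omega), zero_mul]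

theorem Nat.choose_mul_choose_eq_sum (n p q : ℕ) :
    n.choose p * n.choose q =
      ∑ t ∈ range (min p q + 1), (p + q - t).choose p * p.choose t * n.choose (p + q - t) := by
  have hrev : ∀ t ∈ range (min p q + 1),
      (p + q - t).choose p * p.choose t * n.choose (p + q - t) =
        n.choose p * (p.choose t * (n - p).choose (q - t)) := by
    intro t ht
    rw [mem_range] at ht
    rw [mul_comm, ← mul_assoc, Nat.choose_mul (by omega), show p + q - t - p = q - t by omega]
    ring
  rw [sum_congr rfl hrev, ← mul_sum]
  rcases le_or_gt p n with hpn | hnp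
  · obtain ⟨m, rfl⟩ := Nat.exists_eq_add_of_le hpn
    rw [Nat.add_sub_cancel_left, Nat.add_choose_eq_sum_range p m q]
  · simp [Nat.choose_eq_zero_of_lt hnp]

theorem binomialPoly_mul (p q : ℕ) :
    binomialPoly p * binomialPoly q =
      ∑ t ∈ range (min p q + 1),
        ((p + q - t).choose p * p.choose t) • binomialPoly (p + q - t) := by
  refine eq_of_infinite_eval_eq _ _ ((Set.infinite_range_of_injective Nat.cast_injective).mono ?_)
  rintro _ ⟨n, rfl⟩
  simp only [Set.mem_ofPred_eq, nsmul_eq_mul, eval_mul, eval_finsetSum, eval_natCast,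
    eval_natCast_binomialPoly]
  exact_mod_cast Nat.choose_mul_choose_eq_sum n p q

theorem stmt1_general {A : Type*} [Ring A]
    [Algebra ℚ A] (x : A) (p q : ℕ) :
    binomEl x p * binomEl x q =
      ∑ t ∈ Finset.range (min p q + 1),
        ((p + q - t).factorial / ((p - t).factorial * (q - t).factorial * t.factorial)) •
          binomEl x (p + q - t) := by
  simp only [binomEl_eq_aeval_binomialPoly, ← map_mul, binomialPoly_mul, map_sum, map_nsmul]
  refine sum_congr rfl fun t ht => ?_
  rw [mem_range] at ht
  rw [Nat.factorial_div_factorial_mul_factorial_mul_factorial (by omega) (by omega)]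

/-- Let `k` be a commutative ring which is a ℚ-algebra, `A` an associative
unital `k`-algebra, and `x ∈ A`.  Then for all naturals `p, q`:
`binom(x,p)·binom(x,q) = ∑_{t=0}^{min(p,q)} ((p+q−t)!/((p−t)!·(q−t)!·t!)) · binom(x,p+q−t)`. -/
theorem stmt1 {k A : Type*} [CommRing k] [Algebra ℚ k] [Ring A] [Algebra k A]
    [Algebra ℚ A] [IsScalarTower ℚ k A] (x : A) (p q : ℕ) :
    binomEl x p * binomEl x q =
      ∑ t ∈ Finset.range (min p q + 1),
        ((p + q - t).factorial / ((p - t).factorial * (q - t).factorial * t.factorial)) •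
          binomEl x (p + q - t) :=
  stmt1_general x p q
end

section
/- Let k be a commutative ring which is a ℚ-algebra, A an associative unital k-algebra, and λ ∈ k. The λ-weighted Hurwitz product (a ·^λ b)_n = Σ_{r+s+t=n} (n!/(r!·s!·t!))·λ^t·a_{r+t}·b_{s+t} on A^ℕ is k-bilinear, associative, and has the sequence J = (1,0,0,…) as two-sided unit; thus (A^ℕ, ·^λ, J) is an associative unital k-algebra. Moreover, if A is commutative then ·^λ is commutative. -/
/-!
The shift `∂a = (a₁, a₂, …)` is a `λ`-derivation for the weighted Hurwitz product:
`∂(a ·^λ b) = ∂a ·^λ b + a ·^λ ∂b + λ (∂a ·^λ ∂b)`, which is Pascal's recursion for trinomial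
coefficients, and `(a ·^λ b)₀ = a₀ b₀`. A sequence is determined by its first term and its
shift, so associativity, commutativity and the unit laws follow by induction on the index
(simultaneously for all arguments): both sides obey the same recursion.
-/

/-- The `lam`-weighted Hurwitz product on sequences:
`(a ·^lam b)_n = ∑_{r+s+t=n} (n!/(r!·s!·t!)) · lam^t · a_{r+t} · b_{s+t}`,
the sum ranging over triples `(r,s,t)` with `r+s+t = n`, enumerated as
`r = x.1`, `s = y.1`, `t = y.2`. -/
noncomputable def hur {k A : Type*} [CommRing k] [Ring A] [Algebra k A]
    (lam : k) (a b : ℕ → A) : ℕ → A := fun n =>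
  ∑ x ∈ Finset.HasAntidiagonal.antidiagonal n, ∑ y ∈ Finset.HasAntidiagonal.antidiagonal x.2,
    (n.factorial / (x.1.factorial * y.1.factorial * y.2.factorial)) •
      (lam ^ y.2 • (a (x.1 + y.2) * b (y.1 + y.2)))

/-- The sequence `J = (1,0,0,…)`, the unit for the weighted Hurwitz products. -/
def Jseq (A : Type*) [One A] [Zero A] : ℕ → A := fun n => if n = 0 then 1 else 0

open Finset hiding antidiagonal mem_antidiagonal
open Finset.HasAntidiagonal

namespace Hurwitz

lemma factorial_div_eq_choose_mul_choose {n r s t : ℕ} (h : r + (s + t) = n) :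
    n.factorial / (r.factorial * s.factorial * t.factorial)
      = n.choose r * (s + t).choose s := by
  refine Nat.div_eq_of_eq_mul_left (by positivity) ?_
  have hn := Nat.choose_mul_factorial_mul_factorial (show r ≤ n by omega)
  have hst := Nat.choose_mul_factorial_mul_factorial (show s ≤ s + t by omega)
  rw [show n - r = s + t by omega] at hn
  rw [Nat.add_sub_cancel_left] at hst
  rw [← hn, ← hst]
  ring

lemma sum_antidiagonal_choose_choose_succ {M : Type*} [AddCommMonoid M]
    (f : ℕ → ℕ → ℕ → M) (n : ℕ) :
    ∑ x ∈ antidiagonal (n + 1), (n + 1).choose x.1 •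
        ∑ y ∈ antidiagonal x.2, x.2.choose y.1 • f x.1 y.1 y.2
      = ∑ x ∈ antidiagonal n, n.choose x.1 • ∑ y ∈ antidiagonal x.2, x.2.choose y.1 •
          (f (x.1 + 1) y.1 y.2 + f x.1 (y.1 + 1) y.2 + f x.1 y.1 (y.2 + 1)) := by
  rw [sum_antidiagonal_choose_succ_nsmul
    (fun r m => ∑ y ∈ antidiagonal m, m.choose y.1 • f r y.1 y.2)]
  have sum_choose_snd : ∀ (m : ℕ) (g : ℕ × ℕ → M),
      ∑ x ∈ antidiagonal m, m.choose x.2 • g x = ∑ x ∈ antidiagonal m, m.choose x.1 • g x :=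
    fun m g => sum_congr rfl fun x hx => by
      rw [Nat.choose_symm_of_eq_add (mem_antidiagonal.1 hx).symm]
  simp only [sum_antidiagonal_choose_succ_nsmul (f _), smul_add, sum_add_distrib, sum_choose_snd]
  abel

def shift {A : Type*} (a : ℕ → A) : ℕ → A := fun n => a (n + 1)

section

variable {k A : Type*} [CommRing k] [Ring A] [Algebra k A] (lam : k)

lemma hur_eq_sum_choose (a b : ℕ → A) (n : ℕ) :
    hur lam a b n = ∑ x ∈ antidiagonal n, n.choose x.1 • ∑ y ∈ antidiagonal x.2,
      x.2.choose y.1 • (lam ^ y.2 • (a (x.1 + y.2) * b (y.1 + y.2))) := by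
  refine sum_congr rfl fun x hx => ?_
  rw [smul_sum]
  refine sum_congr rfl fun y hy => ?_
  rw [mem_antidiagonal] at hx hy
  rw [factorial_div_eq_choose_mul_choose (by rw [hy, hx]), ← hy, mul_smul]

lemma hur_apply_zero (a b : ℕ → A) : hur lam a b 0 = a 0 * b 0 := by
  simp [hur]

lemma hur_apply_succ (a b : ℕ → A) (n : ℕ) :
    hur lam a b (n + 1) = hur lam (shift a) b n + hur lam a (shift b) n
      + lam • hur lam (shift a) (shift b) n := by
  rw [hur_eq_sum_choose,
    sum_antidiagonal_choose_choose_succ fun r s t => lam ^ t • (a (r + t) * b (s + t))]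
  simp only [hur_eq_sum_choose, shift, smul_add, sum_add_distrib, smul_sum, pow_succ', mul_smul,
    add_right_comm _ 1, ← add_assoc, smul_comm lam (_ : ℕ)]

lemma shift_hur (a b : ℕ → A) :
    shift (hur lam a b) = hur lam (shift a) b + hur lam a (shift b)
      + lam • hur lam (shift a) (shift b) :=
  funext (hur_apply_succ lam a b)

lemma hur_add_left (a b c : ℕ → A) : hur lam (a + b) c = hur lam a c + hur lam b c := by
  funext n
  simp only [hur, Pi.add_apply, add_mul, smul_add, sum_add_distrib]

lemma hur_add_right (a b c : ℕ → A) : hur lam a (b + c) = hur lam a b + hur lam a c := by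
  funext n
  simp only [hur, Pi.add_apply, mul_add, smul_add, sum_add_distrib]

lemma hur_smul_left (r : k) (a b : ℕ → A) : hur lam (r • a) b = r • hur lam a b := by
  funext n
  simp only [hur, Pi.smul_apply, smul_mul_assoc, smul_sum]
  refine sum_congr rfl fun x _ => sum_congr rfl fun y _ => ?_
  rw [smul_comm (lam ^ y.2) r, smul_comm _ r]

lemma hur_smul_right (r : k) (a b : ℕ → A) : hur lam a (r • b) = r • hur lam a b := by
  funext n
  simp only [hur, Pi.smul_apply, mul_smul_comm, smul_sum]
  refine sum_congr rfl fun x _ => sum_congr rfl fun y _ => ?_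
  rw [smul_comm (lam ^ y.2) r, smul_comm _ r]

lemma hur_zero_left (a : ℕ → A) : hur lam 0 a = 0 := by
  funext n
  simp [hur]

lemma hur_zero_right (a : ℕ → A) : hur lam a 0 = 0 := by
  funext n
  simp [hur]

lemma hur_assoc (a b c : ℕ → A) : hur lam (hur lam a b) c = hur lam a (hur lam b c) := by
  funext n
  induction n generalizing a b c with
  | zero => simp only [hur_apply_zero, mul_assoc]
  | succ n ih =>
    simp only [hur_apply_succ, shift_hur, hur_add_left, hur_add_right, hur_smul_left,
      hur_smul_right, Pi.add_apply, Pi.smul_apply, ih]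
    module

lemma hur_comm (hA : ∀ x y : A, x * y = y * x) (a b : ℕ → A) : hur lam a b = hur lam b a := by
  funext n
  induction n generalizing a b with
  | zero => rw [hur_apply_zero, hur_apply_zero, hA]
  | succ n ih =>
    rw [hur_apply_succ, hur_apply_succ, ih (shift a) b, ih a (shift b), ih (shift a) (shift b)]
    abel

lemma shift_Jseq : shift (Jseq A) = 0 := by
  funext n
  simp [shift, Jseq]

lemma hur_Jseq_left (a : ℕ → A) : hur lam (Jseq A) a = a := by
  funext n
  induction n generalizing a with
  | zero => simp [hur_apply_zero, Jseq]
  | succ n ih => rw [hur_apply_succ, shift_Jseq, hur_zero_left, hur_zero_left, ih]; simp [shift]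

lemma hur_Jseq_right (a : ℕ → A) : hur lam a (Jseq A) = a := by
  funext n
  induction n generalizing a with
  | zero => simp [hur_apply_zero, Jseq]
  | succ n ih => rw [hur_apply_succ, shift_Jseq, hur_zero_right, hur_zero_right, ih]; simp [shift]

end

end Hurwitz

theorem stmt3_general {k A : Type*} [CommRing k] [Ring A] [Algebra k A] (lam : k) :
    (∀ a b c : ℕ → A, hur lam (a + b) c = hur lam a c + hur lam b c) ∧
    (∀ a b c : ℕ → A, hur lam a (b + c) = hur lam a b + hur lam a c) ∧
    (∀ (r : k) (a b : ℕ → A), hur lam (r • a) b = r • hur lam a b) ∧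
    (∀ (r : k) (a b : ℕ → A), hur lam a (r • b) = r • hur lam a b) ∧
    (∀ a b c : ℕ → A, hur lam (hur lam a b) c = hur lam a (hur lam b c)) ∧
    (∀ a : ℕ → A, hur lam (Jseq A) a = a) ∧
    (∀ a : ℕ → A, hur lam a (Jseq A) = a) ∧
    ((∀ x y : A, x * y = y * x) → ∀ a b : ℕ → A, hur lam a b = hur lam b a) :=
  ⟨Hurwitz.hur_add_left lam, Hurwitz.hur_add_right lam, Hurwitz.hur_smul_left lam,
    Hurwitz.hur_smul_right lam, Hurwitz.hur_assoc lam, Hurwitz.hur_Jseq_left lam,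
    Hurwitz.hur_Jseq_right lam, Hurwitz.hur_comm lam⟩

/-- The `λ`-weighted Hurwitz product on `A^ℕ` is `k`-bilinear, associative,
and has `J = (1,0,0,…)` as a two-sided unit; moreover if `A` is commutative then so is it. -/
theorem stmt3 {k A : Type*} [CommRing k] [Algebra ℚ k] [Ring A] [Algebra k A] (lam : k) :
    (∀ a b c : ℕ → A, hur lam (a + b) c = hur lam a c + hur lam b c) ∧
    (∀ a b c : ℕ → A, hur lam a (b + c) = hur lam a b + hur lam a c) ∧
    (∀ (r : k) (a b : ℕ → A), hur lam (r • a) b = r • hur lam a b) ∧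
    (∀ (r : k) (a b : ℕ → A), hur lam a (r • b) = r • hur lam a b) ∧
    (∀ a b c : ℕ → A, hur lam (hur lam a b) c = hur lam a (hur lam b c)) ∧
    (∀ a : ℕ → A, hur lam (Jseq A) a = a) ∧
    (∀ a : ℕ → A, hur lam a (Jseq A) = a) ∧
    ((∀ x y : A, x * y = y * x) → ∀ a b : ℕ → A, hur lam a b = hur lam b a) :=
  stmt3_general lam
end

section
/- Let k be a commutative ring which is a ℚ-algebra, A an associative unital k-algebra, and λ ∈ k. The map λ̂ : A^ℕ → A^ℕ defined by λ̂(a)_n = λ^n·a_n is a morphism of k-algebras from (A^ℕ, ·^λ) to (A^ℕ, ·^1): it is k-linear, sends the unit J = (1,0,0,…) to itself, and satisfies λ̂(a ·^λ b) = λ̂(a) ·^1 λ̂(b) for all a, b ∈ A^ℕ. -/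
/-- The map `λ̂(a)_n = λ^n · a_n`. -/
noncomputable def lamHat {k A : Type*} [CommRing k] [Ring A] [Algebra k A]
    (lam : k) (a : ℕ → A) : ℕ → A := fun n => lam ^ n • a n

section LamHat

variable {k A : Type*} [CommRing k] [Ring A] [Algebra k A]

theorem lamHat_add (lam : k) (a b : ℕ → A) :
    lamHat lam (a + b) = lamHat lam a + lamHat lam b :=
  funext fun n => smul_add (lam ^ n) (a n) (b n)

theorem lamHat_smul (lam r : k) (a : ℕ → A) : lamHat lam (r • a) = r • lamHat lam a :=
  funext fun n => smul_comm (lam ^ n) r (a n)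

theorem lamHat_Jseq (lam : k) : lamHat lam (Jseq A) = Jseq A := by
  funext n
  cases n <;> simp [lamHat, Jseq]

/-- Termwise, the weight `λ^t` and the outer `λ^n` recombine as `λ^(r+t) · λ^(s+t)`,
since `n + t = (r + t) + (s + t)`. -/
theorem lamHat_hur (lam : k) (a b : ℕ → A) :
    lamHat lam (hur lam a b) = hur (1 : k) (lamHat lam a) (lamHat lam b) := by
  funext n
  simp only [lamHat, hur, Finset.smul_sum, one_pow, one_smul]
  refine Finset.sum_congr rfl fun x hx => Finset.sum_congr rfl fun y hy => ?_
  rw [Finset.HasAntidiagonal.mem_antidiagonal] at hx hy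
  have hexp : lam ^ n * lam ^ y.2 = lam ^ (x.1 + y.2) * lam ^ (y.1 + y.2) := by
    rw [← pow_add, ← pow_add]
    congr 1
    omega
  rw [smul_mul_smul_comm, smul_comm (_ : ℕ), smul_smul, hexp, smul_comm]

end LamHat

theorem stmt4_general {k A : Type*} [CommRing k] [Ring A] [Algebra k A] (lam : k) :
    (∀ a b : ℕ → A, lamHat lam (a + b) = lamHat lam a + lamHat lam b) ∧
    (∀ (r : k) (a : ℕ → A), lamHat lam (r • a) = r • lamHat lam a) ∧
    (lamHat lam (Jseq A) = Jseq A) ∧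
    (∀ a b : ℕ → A,
      lamHat lam (hur lam a b) = hur (1 : k) (lamHat lam a) (lamHat lam b)) :=
  ⟨lamHat_add lam, lamHat_smul lam, lamHat_Jseq lam, lamHat_hur lam⟩

/-- `λ̂` is a morphism of `k`-algebras `(A^ℕ, ·^λ) → (A^ℕ, ·^1)`:
it is `k`-linear, sends the unit `J` to itself, and `λ̂(a ·^λ b) = λ̂(a) ·^1 λ̂(b)`. -/
theorem stmt4 {k A : Type*} [CommRing k] [Algebra ℚ k] [Ring A] [Algebra k A] (lam : k) :
    (∀ a b : ℕ → A, lamHat lam (a + b) = lamHat lam a + lamHat lam b) ∧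
    (∀ (r : k) (a : ℕ → A), lamHat lam (r • a) = r • lamHat lam a) ∧
    (lamHat lam (Jseq A) = Jseq A) ∧
    (∀ a b : ℕ → A,
      lamHat lam (hur lam a b) = hur (1 : k) (lamHat lam a) (lamHat lam b)) :=
  stmt4_general lam
end

section
/- Let k be a commutative ring which is a ℚ-algebra and A an associative unital k-algebra. The map θ : A^ℕ → A^ℕ defined by θ(a)_n = Σ_{m=0}^{n} (n choose m)·a_m is a k-algebra isomorphism from (A^ℕ, ·^1) to A^ℕ with the pointwise product: it is k-linear, sends J = (1,0,0,…) to the constant sequence 1, satisfies θ(a ·^1 b)_n = θ(a)_n·θ(b)_n for all n, and has two-sided inverse θ̄ given by θ̄(a)_m = Σ_{n=0}^{m} (m choose n)·(−1)^{m−n}·a_n. -/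
/-- The map `θ(a)_n = ∑_{m=0}^{n} (n choose m) · a_m`. -/
def theta {A : Type*} [Ring A] (a : ℕ → A) : ℕ → A := fun n =>
  ∑ m ∈ Finset.range (n + 1), n.choose m • a m

/-- The map `θ̄(a)_m = ∑_{n=0}^{m} (m choose n) · (−1)^{m−n} · a_n`. -/
def thetaBar {A : Type*} [Ring A] (a : ℕ → A) : ℕ → A := fun m =>
  ∑ n ∈ Finset.range (m + 1), m.choose n • ((-1 : ℤ) ^ (m - n) • a n)

open Finset
open scoped Nat

def shift {A : Type*} (a : ℕ → A) : ℕ → A := fun n => a (n + 1)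

@[simp]
lemma shift_apply {A : Type*} (a : ℕ → A) (n : ℕ) : shift a n = a (n + 1) := rfl

lemma sum_antidiagonal_choose_succ_nsmul_fst {M : Type*} [AddCommMonoid M] (f : ℕ → ℕ → M)
    (n : ℕ) :
    ∑ ij ∈ antidiagonal (n + 1), (n + 1).choose ij.1 • f ij.1 ij.2 =
      ∑ ij ∈ antidiagonal n, n.choose ij.1 • f ij.1 (ij.2 + 1) +
        ∑ ij ∈ antidiagonal n, n.choose ij.1 • f (ij.1 + 1) ij.2 := by
  rw [sum_antidiagonal_choose_succ_nsmul]
  congr 1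
  refine sum_congr rfl fun ij hij => ?_
  rw [Nat.choose_symm_of_eq_add (mem_antidiagonal.mp hij).symm]

section Binomial

variable {A : Type*} [Ring A]

lemma theta_add (a b : ℕ → A) : theta (a + b) = theta a + theta b := by
  funext n
  simp only [theta, Pi.add_apply, smul_add, sum_add_distrib]

lemma theta_sub (a b : ℕ → A) : theta (a - b) = theta a - theta b := by
  funext n
  simp only [theta, Pi.sub_apply, smul_sub, sum_sub_distrib]

lemma thetaBar_add (a b : ℕ → A) : thetaBar (a + b) = thetaBar a + thetaBar b := by
  funext n
  simp only [thetaBar, Pi.add_apply, smul_add, sum_add_distrib]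

lemma theta_smul {R : Type*} [Monoid R] [DistribMulAction R A] (r : R)
    (a : ℕ → A) : theta (r • a) = r • theta a := by
  funext n
  simp only [theta, Pi.smul_apply, smul_sum, smul_comm r]

lemma theta_Jseq : theta (Jseq A) = fun _ => 1 := by
  funext n
  simp [theta, Jseq]

lemma theta_zero (a : ℕ → A) : theta a 0 = a 0 := by
  simp [theta]

lemma thetaBar_zero (a : ℕ → A) : thetaBar a 0 = a 0 := by
  simp [thetaBar]

lemma theta_succ (a : ℕ → A) (n : ℕ) : theta a (n + 1) = theta a n + theta (shift a) n :=
  sum_choose_succ_nsmul (fun i _ => a i) n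

lemma thetaBar_succ (a : ℕ → A) (n : ℕ) :
    thetaBar a (n + 1) = thetaBar (shift a) n - thetaBar a n := by
  have h := sum_choose_succ_nsmul (fun i j => (-1 : ℤ) ^ j • a i) n
  have hneg :
      ∑ i ∈ range (n + 1), n.choose i • ((-1 : ℤ) ^ (n + 1 - i) • a i) = -thetaBar a n := by
    rw [thetaBar, ← sum_neg_distrib]
    refine sum_congr rfl fun i hi => ?_
    rw [Nat.sub_add_comm (Nat.lt_succ_iff.mp (mem_range.mp hi)), pow_succ, mul_neg_one, neg_smul,
      smul_neg]
  rw [thetaBar, h, hneg, sub_eq_neg_add]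
  rfl

lemma shift_theta (a : ℕ → A) : shift (theta a) = theta a + theta (shift a) :=
  funext (theta_succ a)

lemma shift_thetaBar (a : ℕ → A) : shift (thetaBar a) = thetaBar (shift a) - thetaBar a :=
  funext (thetaBar_succ a)

theorem theta_thetaBar (a : ℕ → A) : theta (thetaBar a) = a := by
  funext n
  induction n generalizing a with
  | zero => rw [theta_zero, thetaBar_zero]
  | succ n ih => rw [theta_succ, shift_thetaBar, theta_sub, Pi.sub_apply, ih, ih, shift_apply,
      add_sub_cancel]

theorem thetaBar_theta (a : ℕ → A) : thetaBar (theta a) = a := by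
  funext n
  induction n generalizing a with
  | zero => rw [thetaBar_zero, theta_zero]
  | succ n ih => rw [thetaBar_succ, shift_theta, thetaBar_add, Pi.add_apply, ih, ih, shift_apply,
      add_sub_cancel_left]

end Binomial

lemma factorial_div_factorial_mul_factorial_mul_factorial (r s t : ℕ) :
    (r + (s + t))! / (r ! * s ! * t !) = (r + (s + t)).choose r * (s + t).choose s := by
  apply Nat.div_eq_of_eq_mul_left (by positivity)
  have h₁ := Nat.add_choose_mul_factorial_mul_factorial (s + t) r
  have h₂ := Nat.add_choose_mul_factorial_mul_factorial t s
  rw [add_comm (s + t) r] at h₁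
  rw [add_comm t s] at h₂
  rw [← h₁, ← h₂]
  ring

section Hurwitz

variable {k A : Type*} [CommRing k] [Ring A] [Algebra k A]

def hurInner (lam : k) (a b : ℕ → A) (i j : ℕ) : A :=
  ∑ y ∈ antidiagonal j, j.choose y.1 • (lam ^ y.2 • (a (i + y.2) * b (y.1 + y.2)))

lemma hur_eq_sum_hurInner (lam : k) (a b : ℕ → A) (n : ℕ) :
    hur lam a b n = ∑ x ∈ antidiagonal n, n.choose x.1 • hurInner lam a b x.1 x.2 := by
  refine sum_congr rfl fun ⟨r, u⟩ hx => ?_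
  rw [hurInner, smul_sum]
  refine sum_congr rfl fun ⟨s, t⟩ hy => ?_
  obtain rfl := mem_antidiagonal.mp hx
  obtain rfl := mem_antidiagonal.mp hy
  rw [smul_smul, factorial_div_factorial_mul_factorial_mul_factorial]

lemma hurInner_succ_left (lam : k) (a b : ℕ → A) (i j : ℕ) :
    hurInner lam a b (i + 1) j = hurInner lam (shift a) b i j := by
  simp only [hurInner, shift_apply, Nat.add_right_comm i 1]

lemma hurInner_succ_right (lam : k) (a b : ℕ → A) (i j : ℕ) :
    hurInner lam a b i (j + 1) =
      lam • hurInner lam (shift a) (shift b) i j + hurInner lam a (shift b) i j := by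
  rw [hurInner,
    sum_antidiagonal_choose_succ_nsmul_fst (fun s t => lam ^ t • (a (i + t) * b (s + t))),
    hurInner, hurInner, smul_sum]
  congr 1
  · refine sum_congr rfl fun y _ => ?_
    rw [smul_comm lam, pow_succ', mul_smul]
    simp only [shift_apply, add_assoc]
  · simp only [shift_apply, Nat.add_right_comm _ 1]

lemma hur_zero (lam : k) (a b : ℕ → A) : hur lam a b 0 = a 0 * b 0 := by
  simp [hur]

lemma shift_hur (lam : k) (a b : ℕ → A) :
    shift (hur lam a b) =
      hur lam (shift a) b + hur lam a (shift b) + lam • hur lam (shift a) (shift b) := by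
  funext n
  simp only [shift_apply, Pi.add_apply, Pi.smul_apply, hur_eq_sum_hurInner,
    sum_antidiagonal_choose_succ_nsmul_fst, hurInner_succ_left, hurInner_succ_right, smul_add,
    sum_add_distrib, smul_sum, smul_comm lam]
  abel

theorem theta_hur_one (a b : ℕ → A) (n : ℕ) :
    theta (hur (1 : k) a b) n = theta a n * theta b n := by
  induction n generalizing a b with
  | zero => rw [theta_zero, theta_zero, theta_zero, hur_zero]
  | succ n ih =>
    rw [theta_succ, shift_hur, one_smul, theta_add, theta_add, Pi.add_apply, Pi.add_apply, ih, ih,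
      ih, ih, theta_succ a, theta_succ b]
    noncomm_ring

end Hurwitz

theorem stmt5_general {k A : Type*} [CommRing k] [Ring A] [Algebra k A] :
    (∀ a b : ℕ → A, theta (a + b) = theta a + theta b) ∧
    (∀ (r : k) (a : ℕ → A), theta (r • a) = r • theta a) ∧
    (theta (Jseq A) = fun _ => (1 : A)) ∧
    (∀ a b : ℕ → A, ∀ n, theta (hur (1 : k) a b) n = theta a n * theta b n) ∧
    (∀ a : ℕ → A, thetaBar (theta a) = a) ∧
    (∀ a : ℕ → A, theta (thetaBar a) = a) :=
  ⟨theta_add, theta_smul, theta_Jseq, theta_hur_one, thetaBar_theta, theta_thetaBar⟩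

/-- `θ` is a `k`-algebra isomorphism from `(A^ℕ, ·^1)` to `A^ℕ` with the
pointwise product: it is `k`-linear, sends `J` to the constant sequence `1`, is
multiplicative, and has two-sided inverse `θ̄`. -/
theorem stmt5 {k A : Type*} [CommRing k] [Algebra ℚ k] [Ring A] [Algebra k A] :
    (∀ a b : ℕ → A, theta (a + b) = theta a + theta b) ∧
    (∀ (r : k) (a : ℕ → A), theta (r • a) = r • theta a) ∧
    (theta (Jseq A) = fun _ => (1 : A)) ∧
    (∀ a b : ℕ → A, ∀ n, theta (hur (1 : k) a b) n = theta a n * theta b n) ∧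
    (∀ a : ℕ → A, thetaBar (theta a) = a) ∧
    (∀ a : ℕ → A, theta (thetaBar a) = a) :=
  stmt5_general
end

section
/- Let k be a commutative ring which is a ℚ-algebra, A an associative unital k-algebra, and λ ∈ k. The map γ : A^ℕ → A^ℕ defined by γ(a)_n = Σ_{m=0}^{n} (n choose m)·λ^m·a_m is a k-algebra morphism from (A^ℕ, ·^λ) to A^ℕ with the pointwise product: it is k-linear, sends J = (1,0,0,…) to the constant sequence 1, and satisfies γ(a ·^λ b)_n = γ(a)_n·γ(b)_n for all n. Moreover, if λ is invertible in k, then γ is bijective, hence a k-algebra isomorphism. -/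
/-- The map `γ(a)_n = ∑_{m=0}^{n} (n choose m) · λ^m · a_m`. -/
noncomputable def gam {k A : Type*} [CommRing k] [Ring A] [Algebra k A]
    (lam : k) (a : ℕ → A) : ℕ → A := fun n =>
  ∑ m ∈ Finset.range (n + 1), n.choose m • (lam ^ m • a m)

/-!
Identify a sequence `a` with the `k`-linear functional `L_a` on `k[X]` sending `X ^ m` to `a m`.
Then `γ(a)_n = L_a((λX + 1) ^ n)`, so `γ` is `k`-linear, and for a unit `λ` it is conjugate to
`L ↦ L ∘ σ` for the automorphism `σ : X ↦ λX + 1` of `k[X]`, hence bijective.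
For multiplicativity, pair `a` and `b` into the functional on `k[X₀, X₁]` sending `X₀ ^ i * X₁ ^ j`
to `a i * b j`. By the trinomial theorem, `(a ·^λ b)_m` is its value at `(X₀ + X₁ + λX₀X₁) ^ m`,
and `λ(X₀ + X₁ + λX₀X₁) + 1 = (λX₀ + 1)(λX₁ + 1)`.
-/

open Polynomial

theorem Nat.choose_mul_choose_eq_factorial_div {r s t : ℕ} :
    (r + (s + t)).choose r * (s + t).choose s =
      (r + (s + t)).factorial / (r.factorial * s.factorial * t.factorial) := by
  have h := (Nat.add_choose_mul_factorial_mul_factorial r (s + t)).symm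
  rw [← Nat.add_choose_mul_factorial_mul_factorial s t] at h
  rw [Nat.choose_symm_add, Nat.choose_symm_add]
  exact (Nat.div_eq_of_eq_mul_left (by positivity) (by rw [h]; ring)).symm

section
variable {k A : Type*} [CommRing k] [Ring A] [Algebra k A]

noncomputable def seqFunctional (a : ℕ → A) : k[X] →ₗ[k] A :=
  (basisMonomials k).constr k a

theorem seqFunctional_monomial (a : ℕ → A) (n : ℕ) (c : k) :
    seqFunctional a (monomial n c) = c • a n := by
  have h : monomial n c = c • basisMonomials k n := by simp [smul_monomial]
  rw [h, map_smul, seqFunctional, Module.Basis.constr_basis]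

theorem gam_eq_seqFunctional (lam : k) (a : ℕ → A) (n : ℕ) :
    gam lam a n = seqFunctional a ((C lam * X + 1) ^ n) := by
  rw [add_pow, map_sum, gam]
  refine Finset.sum_congr rfl fun m _ => ?_
  have hterm : (C lam * X) ^ m * 1 ^ (n - m) * (n.choose m : k[X]) =
      monomial m ((n.choose m : k) * lam ^ m) := by
    rw [← C_mul_X_pow_eq_monomial]; simp only [map_mul, map_pow, map_natCast]; ring
  rw [hterm, seqFunctional_monomial, mul_smul, Nat.cast_smul_eq_nsmul]

theorem gam_bijective {lam : k} (hlam : IsUnit lam) : Function.Bijective (gam (A := A) lam) := by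
  let := hlam.invertible
  let e := (basisMonomials k).constr (M' := A) k
  let σ := (algEquivCMulXAddC lam 1).symm.toLinearEquiv
  have h : gam (A := A) lam = e.symm ∘ LinearEquiv.arrowCongr σ (LinearEquiv.refl k A) ∘ e := by
    funext a n
    simp [e, σ, gam_eq_seqFunctional, seqFunctional]
  rw [h]
  exact e.symm.bijective.comp ((LinearEquiv.bijective _).comp e.bijective)

local notation "X₀" => (MvPolynomial.X 0 : MvPolynomial (Fin 2) k)
local notation "X₁" => (MvPolynomial.X 1 : MvPolynomial (Fin 2) k)

noncomputable def seqFunctional₂ (a b : ℕ → A) : MvPolynomial (Fin 2) k →ₗ[k] A :=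
  (MvPolynomial.basisMonomials (Fin 2) k).constr k fun e => a (e 0) * b (e 1)

theorem seqFunctional₂_monomial (a b : ℕ → A) (e : Fin 2 →₀ ℕ) (c : k) :
    seqFunctional₂ a b (MvPolynomial.monomial e c) = c • (a (e 0) * b (e 1)) := by
  have h : MvPolynomial.monomial e c = c • MvPolynomial.basisMonomials (Fin 2) k e := by
    simp [MvPolynomial.smul_monomial]
  rw [h, map_smul, seqFunctional₂, Module.Basis.constr_basis]

theorem seqFunctional₂_aeval_mul_aeval (a b : ℕ → A) (p q : k[X]) :
    seqFunctional₂ a b (aeval X₀ p * aeval X₁ q) = seqFunctional a p * seqFunctional b q := by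
  induction p using Polynomial.induction_on' with
  | add p p' hp hp' => rw [map_add, add_mul, map_add, hp, hp', map_add, add_mul]
  | monomial i c =>
    induction q using Polynomial.induction_on' with
    | add q q' hq hq' => rw [map_add, mul_add, map_add, hq, hq', map_add, mul_add]
    | monomial j d =>
      have h : aeval X₀ (monomial i c) * aeval X₁ (monomial j d) =
          MvPolynomial.monomial (Finsupp.single 0 i + Finsupp.single 1 j) (c * d) := by
        simp only [aeval_monomial, MvPolynomial.algebraMap_eq, MvPolynomial.X_pow_eq_monomial,
          MvPolynomial.C_mul_monomial, MvPolynomial.monomial_mul, mul_one]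
      rw [h, seqFunctional₂_monomial, seqFunctional_monomial, seqFunctional_monomial,
        smul_mul_smul_comm]
      simp

theorem seqFunctional₂_X_pow_mul (lam : k) (a b : ℕ → A) (r s t : ℕ) :
    seqFunctional₂ a b (X₀ ^ r * (X₁ ^ s * (MvPolynomial.C lam * X₀ * X₁) ^ t)) =
      lam ^ t • (a (r + t) * b (s + t)) := by
  have h : X₀ ^ r * (X₁ ^ s * (MvPolynomial.C lam * X₀ * X₁) ^ t) =
      MvPolynomial.monomial (Finsupp.single 0 (r + t) + Finsupp.single 1 (s + t)) (lam ^ t) := by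
    simp only [MvPolynomial.X_pow_eq_monomial, mul_pow, ← MvPolynomial.C_pow,
      MvPolynomial.C_mul_monomial, MvPolynomial.monomial_mul]
    rw [Finsupp.single_add, Finsupp.single_add]
    congr 1 <;> [ac_rfl; ring]
  rw [h, seqFunctional₂_monomial]
  simp

theorem hur_eq_seqFunctional₂ (lam : k) (a b : ℕ → A) (n : ℕ) :
    hur lam a b n = seqFunctional₂ a b ((X₀ + (X₁ + MvPolynomial.C lam * X₀ * X₁)) ^ n) := by
  rw [(Commute.all _ _).add_pow', map_sum, hur]
  refine Finset.sum_congr rfl fun x hx => ?_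
  rw [(Commute.all _ _).add_pow', Finset.mul_sum, Finset.smul_sum, map_sum]
  refine Finset.sum_congr rfl fun y hy => ?_
  rw [mul_smul_comm, map_nsmul, map_nsmul, seqFunctional₂_X_pow_mul, smul_smul]
  rw [Finset.HasAntidiagonal.mem_antidiagonal] at hx hy
  rw [← hx, ← hy, Nat.choose_mul_choose_eq_factorial_div]

theorem seqFunctional_hur (lam : k) (a b : ℕ → A) :
    seqFunctional (hur lam a b) =
      seqFunctional₂ a b ∘ₗ (aeval (X₀ + (X₁ + MvPolynomial.C lam * X₀ * X₁))).toLinearMap :=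
  (basisMonomials k).constr_eq k fun n => by
    simp [hur_eq_seqFunctional₂, ← X_pow_eq_monomial]

theorem gam_hur (lam : k) (a b : ℕ → A) (n : ℕ) :
    gam lam (hur lam a b) n = gam lam a n * gam lam b n := by
  have hfactor : aeval (X₀ + (X₁ + MvPolynomial.C lam * X₀ * X₁)) ((C lam * X + 1) ^ n) =
      aeval X₀ ((C lam * X + 1) ^ n) * aeval X₁ ((C lam * X + 1) ^ n) := by
    simp only [map_pow, map_add, map_mul, aeval_C, aeval_X, map_one, MvPolynomial.algebraMap_eq,
      ← mul_pow]
    ring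
  rw [gam_eq_seqFunctional, seqFunctional_hur, LinearMap.comp_apply, AlgHom.toLinearMap_apply,
    hfactor, seqFunctional₂_aeval_mul_aeval, gam_eq_seqFunctional, gam_eq_seqFunctional]

end

theorem stmt6_general {k A : Type*} [CommRing k] [Ring A] [Algebra k A] (lam : k) :
    (∀ a b : ℕ → A, gam lam (a + b) = gam lam a + gam lam b) ∧
    (∀ (r : k) (a : ℕ → A), gam lam (r • a) = r • gam lam a) ∧
    (gam lam (Jseq A) = fun _ => (1 : A)) ∧
    (∀ a b : ℕ → A, ∀ n, gam lam (hur lam a b) n = gam lam a n * gam lam b n) ∧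
    (IsUnit lam → Function.Bijective (gam (A := A) lam)) := by
  refine ⟨fun a b => ?_, fun r a => ?_, ?_, gam_hur lam, gam_bijective⟩
  · funext n
    simp [gam_eq_seqFunctional, seqFunctional]
  · funext n
    simp [gam_eq_seqFunctional, seqFunctional]
  · funext n
    simp [gam, Jseq]

/-- `γ` is a `k`-algebra morphism from `(A^ℕ, ·^λ)` to `A^ℕ` with the
pointwise product: it is `k`-linear, sends `J` to the constant sequence `1`, and is
multiplicative.  Moreover, if `λ` is invertible in `k`, then `γ` is bijective, hence a
`k`-algebra isomorphism. -/
theorem stmt6 {k A : Type*} [CommRing k] [Algebra ℚ k] [Ring A] [Algebra k A] (lam : k) :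
    (∀ a b : ℕ → A, gam lam (a + b) = gam lam a + gam lam b) ∧
    (∀ (r : k) (a : ℕ → A), gam lam (r • a) = r • gam lam a) ∧
    (gam lam (Jseq A) = fun _ => (1 : A)) ∧
    (∀ a b : ℕ → A, ∀ n, gam lam (hur lam a b) n = gam lam a n * gam lam b n) ∧
    (IsUnit lam → Function.Bijective (gam (A := A) lam)) :=
  stmt6_general lam
end

section
/- Let k be a commutative ring which is a ℚ-algebra, A an associative unital k-algebra, λ ∈ k, and P a Rota–Baxter operator of weight λ on A. Then the k-linear map P̃ : A^ℕ → A^ℕ defined by P̃(a)_n = P(a_0) + λ·Σ_{i<n} a_i is a Rota–Baxter operator of weight λ on A^ℕ with the pointwise product: for all a, b ∈ A^ℕ and all n, P̃(a)_n·P̃(b)_n = P̃(P̃(a)·b + a·P̃(b) + λ·a·b)_n, where · denotes the pointwise product. -/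
/-!
Write `S(a)_n = ∑_{i<n} a_i`, so that `P̃(a) = P(a_0) + λ S(a)`. The partial-sum operator `S`
is a Rota–Baxter operator of weight `1` on `A^ℕ` (a discrete summation by parts). Since
`S(·)_0 = 0`, the zeroth term of `P̃(a)·b + a·P̃(b) + λ·a·b` is `P(a_0)b_0 + a_0P(b_0) + λa_0b_0`,
which `P` sends to `P(a_0)P(b_0)`; the remaining terms of `P̃(a)_n P̃(b)_n` are matched by the
identity for `S`.
-/

/-- The lift `P̃` of an operator `P : A → A` to sequences:
`P̃(a)_n = P(a_0) + λ·∑_{i<n} a_i`. -/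
noncomputable def Ptil {k A : Type*} [CommRing k] [Ring A] [Algebra k A]
    (lam : k) (P : A → A) (a : ℕ → A) : ℕ → A := fun n =>
  P (a 0) + lam • ∑ i ∈ Finset.range n, a i

open Finset

theorem sum_range_mul_sum_range {A : Type*} [NonUnitalNonAssocSemiring A] (a b : ℕ → A) (n : ℕ) :
    (∑ i ∈ range n, a i) * (∑ i ∈ range n, b i) =
      ∑ i ∈ range n,
        ((∑ j ∈ range i, a j) * b i + a i * (∑ j ∈ range i, b j) + a i * b i) := by
  induction n with
  | zero => simp
  | succ n ih =>
    simp only [sum_range_succ, ← ih, add_mul, mul_add]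
    abel

section Ptil

variable {k A : Type*} [CommRing k] [Ring A] [Algebra k A] (lam : k) (P : A → A)

theorem Ptil_zero (a : ℕ → A) : Ptil lam P a 0 = P (a 0) := by
  simp [Ptil]

theorem Ptil_add (hPadd : ∀ x y : A, P (x + y) = P x + P y) (a b : ℕ → A) :
    Ptil lam P (a + b) = Ptil lam P a + Ptil lam P b := by
  funext n
  simp only [Ptil, Pi.add_apply, hPadd, sum_add_distrib, smul_add]
  abel

theorem Ptil_smul (hPsmul : ∀ (c : k) (x : A), P (c • x) = c • P x) (c : k) (a : ℕ → A) :
    Ptil lam P (c • a) = c • Ptil lam P a := by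
  funext n
  simp only [Ptil, Pi.smul_apply, hPsmul, ← smul_sum, smul_add, smul_comm c lam]

theorem Ptil_mul_Ptil
    (hPRB : ∀ x y : A, P x * P y = P (P x * y + x * P y + lam • (x * y))) (a b : ℕ → A) (n : ℕ) :
    Ptil lam P a n * Ptil lam P b n =
      Ptil lam P (Ptil lam P a * b + a * Ptil lam P b + lam • (a * b)) n := by
  set c := Ptil lam P a * b + a * Ptil lam P b + lam • (a * b)
  have hc0 : P (c 0) = P (a 0) * P (b 0) := by
    simp only [c, Pi.add_apply, Pi.mul_apply, Pi.smul_apply, Ptil_zero, hPRB]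
  have hc : ∑ i ∈ range n, c i = P (a 0) * ∑ i ∈ range n, b i
      + (∑ i ∈ range n, a i) * P (b 0) + lam • ((∑ i ∈ range n, a i) * ∑ i ∈ range n, b i) := by
    rw [sum_range_mul_sum_range]
    simp only [c, Ptil, Pi.add_apply, Pi.mul_apply, Pi.smul_apply, add_mul, mul_add,
      smul_mul_assoc, mul_smul_comm, sum_add_distrib, mul_sum, sum_mul, ← smul_sum, smul_add]
    abel
  simp only [Ptil, hc0, hc, add_mul, mul_add, smul_mul_assoc, mul_smul_comm, smul_add, smul_smul]
  abel

end Ptil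

theorem stmt10_general {k A : Type*} [CommRing k] [Ring A] [Algebra k A] (lam : k)
    (P : A → A)
    (hPadd : ∀ x y : A, P (x + y) = P x + P y)
    (hPsmul : ∀ (c : k) (x : A), P (c • x) = c • P x)
    (hPRB : ∀ x y : A, P x * P y = P (P x * y + x * P y + lam • (x * y))) :
    (∀ a b : ℕ → A, Ptil lam P (a + b) = Ptil lam P a + Ptil lam P b) ∧
    (∀ (c : k) (a : ℕ → A), Ptil lam P (c • a) = c • Ptil lam P a) ∧
    (∀ (a b : ℕ → A) (n : ℕ),
      Ptil lam P a n * Ptil lam P b n =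
        Ptil lam P (Ptil lam P a * b + a * Ptil lam P b + lam • (a * b)) n) :=
  ⟨Ptil_add lam P hPadd, Ptil_smul lam P hPsmul, Ptil_mul_Ptil lam P hPRB⟩

/-- If `P` is a Rota–Baxter operator of weight `λ` on `A`, then the
`k`-linear map `P̃` is a Rota–Baxter operator of weight `λ` on `A^ℕ` with the pointwise
product: for all `a, b` and all `n`,
`P̃(a)_n·P̃(b)_n = P̃(P̃(a)·b + a·P̃(b) + λ·a·b)_n`. -/
theorem stmt10 {k A : Type*} [CommRing k] [Algebra ℚ k] [Ring A] [Algebra k A] (lam : k)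
    (P : A → A)
    (hPadd : ∀ x y : A, P (x + y) = P x + P y)
    (hPsmul : ∀ (c : k) (x : A), P (c • x) = c • P x)
    (hPRB : ∀ x y : A, P x * P y = P (P x * y + x * P y + lam • (x * y))) :
    (∀ a b : ℕ → A, Ptil lam P (a + b) = Ptil lam P a + Ptil lam P b) ∧
    (∀ (c : k) (a : ℕ → A), Ptil lam P (c • a) = c • Ptil lam P a) ∧
    (∀ (a b : ℕ → A) (n : ℕ),
      Ptil lam P a n * Ptil lam P b n =
        Ptil lam P (Ptil lam P a * b + a * Ptil lam P b + lam • (a * b)) n) :=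
  stmt10_general lam P hPadd hPsmul hPRB
end

section
/- Let k be a commutative ring, λ ∈ k, and A an associative unital k-algebra. (1) The k-linear map ξ : D → C(λ) determined by ξ(e) = e and ξ(d) = λ·d + e is a morphism of k-coalgebras, i.e. ε_{C(λ)}∘ξ = ε_D and δ_{C(λ)}∘ξ = (ξ⊗ξ)∘δ_D. (2) The k-module isomorphism Hom_k(C(λ), A) → A², f ↦ (f(e), f(d)), carries the convolution product to the length-2 λ-Hurwitz product: the convolution unit maps to (1, 0) and f ∗ g maps to (f(e)·g(e), f(d)·g(e) + f(e)·g(d) + λ·f(d)·g(d)). (3) The k-module isomorphism Hom_k(D, A) → A², f ↦ (f(e), f(d)), carries the convolution product to the pointwise product with unit (1,1). (4) Under these identifications, precomposition with ξ is the map γ₂ : A² → A² given by γ₂(a₀, a₁) = (a₀, a₀ + λ·a₁). -/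
open TensorProduct

/-- The basis vector `e` of the free module `k × k`. -/
def eC (k : Type*) [CommRing k] : k × k := (1, 0)

/-- The basis vector `d` of the free module `k × k`. -/
def dC (k : Type*) [CommRing k] : k × k := (0, 1)

/-- The counit of `C(λ)`: `ε(e) = 1`, `ε(d) = 0`. -/
def epsC (k : Type*) [CommRing k] : (k × k) →ₗ[k] k := LinearMap.fst k k k

/-- The comultiplication of `C(λ)`: `δ(e) = e⊗e`, `δ(d) = d⊗e + e⊗d + λ·(d⊗d)`. -/
noncomputable def delC (k : Type*) [CommRing k] (lam : k) :
    (k × k) →ₗ[k] (k × k) ⊗[k] (k × k) :=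
  (LinearMap.fst k k k).smulRight (eC k ⊗ₜ[k] eC k) +
    (LinearMap.snd k k k).smulRight
      (dC k ⊗ₜ[k] eC k + eC k ⊗ₜ[k] dC k + lam • (dC k ⊗ₜ[k] dC k))

/-- The counit of the set-like coalgebra `D`: `ε(e) = ε(d) = 1`. -/
noncomputable def epsD (k : Type*) [CommRing k] : (k × k) →ₗ[k] k :=
  LinearMap.fst k k k + LinearMap.snd k k k

/-- The comultiplication of the set-like coalgebra `D`: `δ(e) = e⊗e`, `δ(d) = d⊗d`. -/
noncomputable def delD (k : Type*) [CommRing k] :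
    (k × k) →ₗ[k] (k × k) ⊗[k] (k × k) :=
  (LinearMap.fst k k k).smulRight (eC k ⊗ₜ[k] eC k) +
    (LinearMap.snd k k k).smulRight (dC k ⊗ₜ[k] dC k)

/-- The `k`-linear map `ξ : D → C(λ)` with `ξ(e) = e` and `ξ(d) = λ·d + e`. -/
noncomputable def xiL (k : Type*) [CommRing k] (lam : k) : (k × k) →ₗ[k] (k × k) :=
  (LinearMap.fst k k k).smulRight (eC k) +
    (LinearMap.snd k k k).smulRight (lam • dC k + eC k)

/-- The convolution product on `Hom_k(C, A)` associated to a comultiplication `δ`: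
`f ∗ g = μ_A ∘ (f ⊗ g) ∘ δ`. -/
noncomputable def convP {k A : Type*} [CommRing k] [Ring A] [Algebra k A]
    (del : (k × k) →ₗ[k] (k × k) ⊗[k] (k × k)) (f g : (k × k) →ₗ[k] A) :
    (k × k) →ₗ[k] A :=
  LinearMap.mul' k A ∘ₗ TensorProduct.map f g ∘ₗ del

lemma linearMap_ext_eC_dC {k M : Type*} [CommRing k] [AddCommMonoid M] [Module k M]
    {f g : (k × k) →ₗ[k] M} (he : f (eC k) = g (eC k)) (hd : f (dC k) = g (dC k)) :
    f = g :=
  LinearMap.prod_ext (LinearMap.ext_ring he) (LinearMap.ext_ring hd)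

section Coalgebras

variable {k : Type*} [CommRing k] (lam : k)

@[simp] lemma epsC_eC : epsC k (eC k) = 1 := rfl

@[simp] lemma epsC_dC : epsC k (dC k) = 0 := rfl

@[simp] lemma epsD_eC : epsD k (eC k) = 1 := by simp [epsD, eC]

@[simp] lemma epsD_dC : epsD k (dC k) = 1 := by simp [epsD, dC]

@[simp] lemma delC_eC : delC k lam (eC k) = eC k ⊗ₜ eC k := by simp [delC, eC]

@[simp] lemma delC_dC :
    delC k lam (dC k) = dC k ⊗ₜ eC k + eC k ⊗ₜ dC k + lam • (dC k ⊗ₜ dC k) := by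
  simp [delC, dC]

@[simp] lemma delD_eC : delD k (eC k) = eC k ⊗ₜ eC k := by simp [delD, eC]

@[simp] lemma delD_dC : delD k (dC k) = dC k ⊗ₜ dC k := by simp [delD, dC]

@[simp] lemma xiL_eC : xiL k lam (eC k) = eC k := by simp [xiL, eC]

@[simp] lemma xiL_dC : xiL k lam (dC k) = lam • dC k + eC k := by simp [xiL, dC]

lemma epsC_comp_xiL : epsC k ∘ₗ xiL k lam = epsD k :=
  linearMap_ext_eC_dC (by simp) (by simp)

lemma delC_comp_xiL :
    delC k lam ∘ₗ xiL k lam = TensorProduct.map (xiL k lam) (xiL k lam) ∘ₗ delD k := by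
  refine linearMap_ext_eC_dC (by simp) ?_
  simp only [LinearMap.comp_apply, xiL_dC, delD_dC, map_add, map_smul, delC_eC, delC_dC,
    TensorProduct.map_tmul, TensorProduct.tmul_add, TensorProduct.add_tmul,
    TensorProduct.tmul_smul, ← TensorProduct.smul_tmul']
  module

lemma comp_xiL_dC {M : Type*} [AddCommMonoid M] [Module k M] (f : (k × k) →ₗ[k] M) :
    (f ∘ₗ xiL k lam) (dC k) = f (eC k) + lam • f (dC k) := by
  simp [add_comm]

end Coalgebras

section Convolution

variable {k A : Type*} [CommRing k] [Ring A] [Algebra k A] (lam : k) (f g : (k × k) →ₗ[k] A)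

lemma convP_apply_of_eq_tmul {del : (k × k) →ₗ[k] (k × k) ⊗[k] (k × k)} {v x y : k × k}
    (h : del v = x ⊗ₜ y) : convP del f g v = f x * g y := by
  simp [convP, h]

lemma convP_delC_eC : convP (delC k lam) f g (eC k) = f (eC k) * g (eC k) :=
  convP_apply_of_eq_tmul f g (delC_eC lam)

lemma convP_delC_dC :
    convP (delC k lam) f g (dC k) =
      f (dC k) * g (eC k) + f (eC k) * g (dC k) + lam • (f (dC k) * g (dC k)) := by
  simp [convP]

lemma convP_delD_eC : convP (delD k) f g (eC k) = f (eC k) * g (eC k) :=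
  convP_apply_of_eq_tmul f g delD_eC

lemma convP_delD_dC : convP (delD k) f g (dC k) = f (dC k) * g (dC k) :=
  convP_apply_of_eq_tmul f g delD_dC

end Convolution

/-- (1) `ξ` is a morphism of `k`-coalgebras from `D` to `C(λ)`.
(2) Under `f ↦ (f(e), f(d))`, convolution on `Hom_k(C(λ), A)` becomes the length-2
`λ`-Hurwitz product, with unit `(1, 0)`.  (3) Under the same identification, convolution
on `Hom_k(D, A)` becomes the pointwise product, with unit `(1, 1)`.  (4) Under these
identifications, precomposition with `ξ` is `γ₂(a₀, a₁) = (a₀, a₀ + λ·a₁)`. -/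
theorem stmt17 {k A : Type*} [CommRing k] [Ring A] [Algebra k A] (lam : k) :
    -- (1) ξ is a coalgebra morphism
    (∀ v : k × k, epsC k (xiL k lam v) = epsD k v) ∧
    (∀ v : k × k,
      delC k lam (xiL k lam v) =
        TensorProduct.map (xiL k lam) (xiL k lam) (delD k v)) ∧
    -- (2) convolution for C(λ) is the length-2 λ-Hurwitz product
    (algebraMap k A (epsC k (eC k)) = 1) ∧
    (algebraMap k A (epsC k (dC k)) = 0) ∧
    (∀ f g : (k × k) →ₗ[k] A,
      convP (delC k lam) f g (eC k) = f (eC k) * g (eC k)) ∧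
    (∀ f g : (k × k) →ₗ[k] A,
      convP (delC k lam) f g (dC k) =
        f (dC k) * g (eC k) + f (eC k) * g (dC k) + lam • (f (dC k) * g (dC k))) ∧
    -- (3) convolution for D is the pointwise product
    (algebraMap k A (epsD k (eC k)) = 1) ∧
    (algebraMap k A (epsD k (dC k)) = 1) ∧
    (∀ f g : (k × k) →ₗ[k] A,
      convP (delD k) f g (eC k) = f (eC k) * g (eC k)) ∧
    (∀ f g : (k × k) →ₗ[k] A,
      convP (delD k) f g (dC k) = f (dC k) * g (dC k)) ∧
    -- (4) precomposition with ξ is γ₂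
    (∀ f : (k × k) →ₗ[k] A,
      (f ∘ₗ xiL k lam) (eC k) = f (eC k) ∧
      (f ∘ₗ xiL k lam) (dC k) = f (eC k) + lam • f (dC k)) := by
  refine ⟨LinearMap.congr_fun (epsC_comp_xiL lam), LinearMap.congr_fun (delC_comp_xiL lam),
    by simp, by simp, convP_delC_eC lam, convP_delC_dC lam, by simp, by simp,
    convP_delD_eC, convP_delD_dC, fun f => ⟨congrArg f (xiL_eC lam), comp_xiL_dC lam f⟩⟩
end
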